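/- arXiv:1903.03172 — 5 statements merged into one kernel-verified Lean document; each statement's English description precedes it below -/
import Mathlib

section
/- Let S be a left Ore set in a domain R. Then LSat(S) := {r ∈ R | ∃ w ∈ R, wr ∈ S} is saturated: if p, q ∈ R and pq ∈ LSat(S), then p ∈ LSat(S) and q ∈ LSat(S). -/
/-- For a left Ore set `S` in a domain `R`, `LSat(S)` is saturated. -/
theorem LSat_of_Ore_saturated (R : Type*) [Ring R] [IsDomain R]
    (S : Submonoid R) (h0 : (0 : R) ∉ S)
    (hOre : ∀ s ∈ S, ∀ r : R, ∃ s' ∈ S, ∃ r' : R, s' * r = r' * s)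
    (p q : R) (h : p * q ∈ {r : R | ∃ w : R, w * r ∈ S}) :
    p ∈ {r : R | ∃ w : R, w * r ∈ S} ∧ q ∈ {r : R | ∃ w : R, w * r ∈ S} := by
  obtain ⟨w, hw⟩ := h
  have hq0 : q ≠ 0 := by
    rintro rfl
    simp only [mul_zero] at hw
    exact h0 hw
  constructor
  · obtain ⟨s', hs', r', hsr⟩ := hOre (w * (p * q)) hw q
    refine ⟨r' * w, ?_⟩
    have : (s' - r' * w * p) * q = 0 := by
      rw [sub_mul, hsr]; noncomm_ring
    have := (mul_eq_zero.mp this).resolve_right hq0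
    have : s' = r' * w * p := sub_eq_zero.mp this
    rw [← this]; exact hs'
  · exact ⟨w * p, by rw [mul_assoc]; exact hw⟩
end

section
/- Let S be a subset of a domain R. Then S satisfies the left Ore condition in R if and only if LSat(S) := {r ∈ R | ∃ w ∈ R, wr ∈ S} satisfies the left Ore condition in R. -/
/-- A subset `S` of a domain satisfies the left Ore condition iff `LSat(S)` does. -/
theorem Ore_iff_LSat_Ore (R : Type*) [Ring R] [IsDomain R] (S : Set R) :
    (∀ s ∈ S, ∀ r : R, ∃ s' ∈ S, ∃ r' : R, s' * r = r' * s) ↔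
      (∀ x ∈ {r : R | ∃ w : R, w * r ∈ S}, ∀ r : R,
        ∃ x' ∈ {r : R | ∃ w : R, w * r ∈ S}, ∃ r' : R, x' * r = r' * x) := by
  constructor
  · rintro h x ⟨w, hw⟩ r
    obtain ⟨s', hs', r', hr'⟩ := h (w * x) hw r
    exact ⟨s', ⟨1, by simpa⟩, r' * w, by rw [hr', mul_assoc]⟩
  · intro h s hs r
    obtain ⟨x', ⟨w, hw⟩, r', hr'⟩ := h s ⟨1, by simpa⟩ r
    exact ⟨w * x', hw, w * r', by rw [mul_assoc, hr', mul_assoc]⟩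
end

section
/- Let S be a left Ore set in a domain R. Then LSat(S) := {r ∈ R | ∃ w ∈ R, wr ∈ S} is again a left Ore set in R: it contains 1, does not contain 0, is closed under multiplication, and satisfies the left Ore condition. -/
/-- For a left Ore set `S` in a domain `R`, `LSat(S)` is again a left Ore set. -/
theorem LSat_is_left_Ore_set (R : Type*) [Ring R] [IsDomain R]
    (S : Submonoid R) (h0 : (0 : R) ∉ S)
    (hOre : ∀ s ∈ S, ∀ r : R, ∃ s' ∈ S, ∃ r' : R, s' * r = r' * s) :
    (1 : R) ∈ {r : R | ∃ w : R, w * r ∈ S} ∧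
    (0 : R) ∉ {r : R | ∃ w : R, w * r ∈ S} ∧
    (∀ a ∈ {r : R | ∃ w : R, w * r ∈ S}, ∀ b ∈ {r : R | ∃ w : R, w * r ∈ S},
      a * b ∈ {r : R | ∃ w : R, w * r ∈ S}) ∧
    (∀ x ∈ {r : R | ∃ w : R, w * r ∈ S}, ∀ r : R,
      ∃ x' ∈ {r : R | ∃ w : R, w * r ∈ S}, ∃ r' : R, x' * r = r' * x) := by
  refine ⟨⟨1, by simpa using S.one_mem⟩, ?_, ?_, ?_⟩
  · rintro ⟨w, hw⟩
    rw [mul_zero] at hw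
    exact h0 hw
  · rintro a ⟨w, hw⟩ b ⟨v, hv⟩
    obtain ⟨s', hs', r', hr'⟩ := hOre (w * a) hw v
    refine ⟨r' * w, ?_⟩
    have : r' * w * (a * b) = s' * (v * b) := by
      rw [← mul_assoc, mul_assoc r' w a, ← hr', mul_assoc]
    rw [this]
    exact S.mul_mem hs' hv
  · rintro x ⟨w, hw⟩ r
    obtain ⟨s', hs', r', hr'⟩ := hOre (w * x) hw r
    exact ⟨s', ⟨1, by simpa using hs'⟩, r' * w, by rw [hr', mul_assoc]⟩
end

section
/- Let S be a left Ore set in a left Ore domain R. Then the localization S⁻¹R is again a left Ore domain, i.e., S⁻¹R \ {0} satisfies the left Ore condition in S⁻¹R. -/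
/-- The left Ore localization of a left Ore domain at a left Ore set is again a
left Ore domain. -/
theorem localization_of_Ore_domain_is_Ore_domain (R A : Type*)
    [Ring R] [IsDomain R] [Ring A] [IsDomain A]
    (hR : ∀ a b : R, b ≠ 0 → ∃ x y : R, x ≠ 0 ∧ x * a = y * b)
    (S : Submonoid R) (h0 : (0 : R) ∉ S)
    (hOre : ∀ s ∈ S, ∀ r : R, ∃ s' ∈ S, ∃ r' : R, s' * r = r' * s)
    (ρ : R →+* A) (hinj : Function.Injective ρ)
    (hunit : ∀ s ∈ S, IsUnit (ρ s))
    (hfrac : ∀ a : A, ∃ s ∈ S, ∃ r : R, ρ s * a = ρ r) :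
    ∀ a b : A, b ≠ 0 → ∃ x y : A, x ≠ 0 ∧ x * a = y * b := by
  intro a b hb
  obtain ⟨s, hs, r, hsr⟩ := hfrac a
  obtain ⟨t, ht, p, htp⟩ := hfrac b
  have hp : p ≠ 0 := by
    intro hp0
    apply hb
    have hut := hunit t ht
    have : ρ t * b = 0 := by rw [htp, hp0, map_zero]
    exact (hut.mul_right_eq_zero).mp this
  obtain ⟨x, y, hx, hxy⟩ := hR r p hp
  have hs0 : s ≠ 0 := fun h => h0 (h ▸ hs)
  refine ⟨ρ (x * s), ρ (y * t), ?_, ?_⟩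
  · intro h
    exact mul_ne_zero hx hs0 (hinj (h.trans (map_zero ρ).symm))
  · rw [map_mul, map_mul, mul_assoc, mul_assoc, hsr, htp, ← map_mul, ← map_mul, hxy]
end

section
/- Let S be a multiplicative set in a commutative domain R. Then S is pre-maximal (i.e., LSat(S) ≠ R \ {0}, and every saturated multiplicative set strictly containing LSat(S) equals R \ {0}) if and only if R \ LSat(S) is a prime ideal of R of height 1. -/
/-- Auxiliary: an element outside a saturated multiplicative set lies in a prime
ideal disjoint from that set. -/
lemma aux_prime_disjoint {R : Type*} [CommRing R] (T : Set R) (h1 : (1 : R) ∈ T)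
    (hTmul : ∀ a ∈ T, ∀ b ∈ T, a * b ∈ T)
    (hTsat : ∀ a b : R, a * b ∈ T → a ∈ T ∧ b ∈ T)
    (x : R) (hx : x ∉ T) :
    ∃ q : Ideal R, q.IsPrime ∧ x ∈ q ∧ Disjoint (q : Set R) T := by
  set M : Submonoid R := ⟨⟨T, fun {a b} ha hb => hTmul a ha b hb⟩, h1⟩ with hM
  have hdisj : Disjoint ((Ideal.span {x} : Ideal R) : Set R) (M : Set R) := by
    rw [Set.disjoint_left]
    intro a ha haT
    obtain ⟨r, rfl⟩ := Ideal.mem_span_singleton'.mp ha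
    exact hx (hTsat r x haT).2
  obtain ⟨p, hp, hle, hdis⟩ := Ideal.exists_le_prime_disjoint _ M hdisj
  exact ⟨p, hp, hle (Ideal.mem_span_singleton_self x), hdis⟩

/-- A multiplicative set `S` in a commutative domain is pre-maximal iff the
complement of `LSat(S)` is a prime ideal of height 1. -/
theorem premaximal_iff_complement_height_one_prime (R : Type*) [CommRing R] [IsDomain R]
    (S : Set R) (h1 : (1 : R) ∈ S) (h0 : (0 : R) ∉ S)
    (hmul : ∀ a ∈ S, ∀ b ∈ S, a * b ∈ S) :
    (({r : R | ∃ w : R, w * r ∈ S} ≠ {r : R | r ≠ 0}) ∧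
      (∀ T : Set R, (1 : R) ∈ T → (0 : R) ∉ T → (∀ a ∈ T, ∀ b ∈ T, a * b ∈ T) →
        (∀ a b : R, a * b ∈ T → a ∈ T ∧ b ∈ T) →
        {r : R | ∃ w : R, w * r ∈ S} ⊂ T → T = {r : R | r ≠ 0})) ↔
    (∃ p : Ideal R, (p : Set R) = {r : R | ∃ w : R, w * r ∈ S}ᶜ ∧ p.IsPrime ∧
      p ≠ ⊥ ∧ ∀ q : Ideal R, q.IsPrime → q ≠ ⊥ → q ≤ p → q = p) := by
  set L : Set R := {r : R | ∃ w : R, w * r ∈ S} with hL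
  have hL1 : (1 : R) ∈ L := ⟨1, by simpa using h1⟩
  have hL0 : (0 : R) ∉ L := fun ⟨w, hw⟩ => h0 (by simpa using hw)
  have hLmul : ∀ a ∈ L, ∀ b ∈ L, a * b ∈ L := by
    rintro a ⟨w1, hw1⟩ b ⟨w2, hw2⟩
    refine ⟨w1 * w2, ?_⟩
    rw [show w1 * w2 * (a * b) = (w1 * a) * (w2 * b) by ring]
    exact hmul _ hw1 _ hw2
  have hLsat : ∀ a b : R, a * b ∈ L → a ∈ L ∧ b ∈ L := by
    rintro a b ⟨w, hw⟩
    exact ⟨⟨w * b, by rwa [show w * b * a = w * (a * b) by ring]⟩,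
      ⟨w * a, by rwa [show w * a * b = w * (a * b) by ring]⟩⟩
  constructor
  · rintro ⟨hne, hpremax⟩
    -- L ≠ R \ {0}, so there is a nonzero element outside L
    have : ∃ a : R, a ≠ 0 ∧ a ∉ L := by
      by_contra hcon
      push_neg at hcon
      apply hne
      ext r
      constructor
      · rintro hr rfl
        exact hL0 hr
      · exact fun hr => hcon r hr
    obtain ⟨a, ha0, haL⟩ := this
    -- key: any prime disjoint from L is ⊥ or has carrier Lᶜ
    have key : ∀ q : Ideal R, q.IsPrime → Disjoint (q : Set R) L →
        q = ⊥ ∨ (q : Set R) = Lᶜ := by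
      intro q hq hdis
      have hsub : L ⊆ ((q : Set R))ᶜ := Set.disjoint_right.mp hdis
      by_cases heq : L = ((q : Set R))ᶜ
      · right
        rw [heq, compl_compl]
      · left
        have hT := hpremax ((q : Set R))ᶜ (fun h => hq.ne_top (q.eq_top_iff_one.mpr h))
          (fun h => h q.zero_mem)
          (fun x hx y hy hxy => (hq.mul_mem_iff_mem_or_mem.mp hxy).elim hx hy)
          (fun x y hxy => ⟨fun hx => hxy (q.mul_mem_right y hx),
            fun hy => hxy (q.mul_mem_left x hy)⟩)
          ⟨hsub, fun h => heq (le_antisymm hsub h)⟩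
        ext x
        simp only [Ideal.mem_bot]
        constructor
        · intro hx
          by_contra hx0
          have : x ∈ ((q : Set R))ᶜ := hT ▸ hx0
          exact this hx
        · rintro rfl; exact q.zero_mem
    obtain ⟨q, hq, haq, hdis⟩ := aux_prime_disjoint L hL1 hLmul hLsat a haL
    have hqne : q ≠ ⊥ := fun h => ha0 (by simpa [h] using haq)
    have hqc : (q : Set R) = Lᶜ := (key q hq hdis).resolve_left hqne
    refine ⟨q, hqc, hq, hqne, fun q' hq' hq'ne hle => ?_⟩
    have hdis' : Disjoint ((q' : Set R)) L := by
      rw [Set.disjoint_left]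
      intro x hx hxL
      have : x ∈ (q : Set R) := hle hx
      rw [hqc] at this
      exact this hxL
    have := (key q' hq' hdis').resolve_left hq'ne
    exact SetLike.coe_injective (this.trans hqc.symm)
  · rintro ⟨p, hpc, hp, hpne, hmin⟩ 
    have hLcompl : L = ((p : Set R))ᶜ := by rw [hpc, compl_compl]
    constructor
    · intro heq
      obtain ⟨x, hxp, hx0⟩ := Submodule.exists_mem_ne_zero_of_ne_bot hpne
      have : x ∈ L := heq ▸ hx0
      rw [hLcompl] at this
      exact this hxp
    · intro T hT1 hT0 hTmul hTsat hLT
      ext x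
      simp only [Set.mem_setOf_eq]
      constructor
      · intro hx
        rintro rfl
        exact hT0 hx
      · intro hx0
        by_contra hxT
        obtain ⟨q, hq, hxq, hdis⟩ := aux_prime_disjoint T hT1 hTmul hTsat x hxT
        have hqle : q ≤ p := by
          intro y hy
          have hyT : y ∉ T := Set.disjoint_left.mp hdis hy
          have hyL : y ∉ L := fun h => hyT (hLT.1 h)
          rw [hLcompl] at hyL
          simpa using hyL
        have hqne : q ≠ ⊥ := fun h => hx0 (by simpa [h] using hxq)
        have hqp := hmin q hq hqne hqle
        obtain ⟨t, htT, htL⟩ := Set.exists_of_ssubset hLT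
        have : t ∈ p := by
          rw [hLcompl] at htL; simpa using htL
        rw [← hqp] at this
        exact Set.disjoint_left.mp hdis this htT
end
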